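/- Suppose n is odd with n ≥ 3. Then for an integer k with 1 ≤ k ≤ m, there exists a profile u with |G_C(u)| = k if and only if it is not the case that (m is even and k = m) and not the case that (m is odd and k = m − 1). -/

import Mathlib

open Finset

/-- `x` defeats `y` by simple majority at `u`:
`|{i : x ≻_{u(i)} y}| > |{i : y ≻_{u(i)} x}|`.  A profile assigns to each
individual `i` a rank equivalence `u i : Fin m ≃ Fin m` (lower rank = better),
so `i` prefers `x` to `y` iff `(u i) x < (u i) y`. -/
def defeats {m n : ℕ} (u : Fin n → (Fin m ≃ Fin m)) (x y : Fin m) : Prop :=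
  (univ.filter (fun i : Fin n => (u i) y < (u i) x)).card <
    (univ.filter (fun i : Fin n => (u i) x < (u i) y)).card

instance {m n : ℕ} (u : Fin n → (Fin m ≃ Fin m)) : DecidableRel (defeats u) :=
  fun _ _ => by unfold defeats; infer_instance

/-- The Copeland score of `x` at `u`: the number of alternatives `x` defeats
by simple majority. -/
def copelandScore {m n : ℕ} (u : Fin n → (Fin m ≃ Fin m)) (x : Fin m) : ℕ :=
  (univ.filter (fun y : Fin m => defeats u x y)).card

/-- The Copeland correspondence `G_C(u)`: alternatives with maximal Copeland
score. -/
def copelandSet {m n : ℕ} (u : Fin n → (Fin m ≃ Fin m)) : Finset (Fin m) :=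
  univ.filter (fun x => ∀ z : Fin m, copelandScore u z ≤ copelandScore u x)

/-!
With an odd number of voters the majority relation is a tournament, so the Copeland scores add
up to `m (m - 1) / 2`. If all `m` alternatives tie, each scores `(m - 1) / 2` and `m` is odd. If
`m = 2c + 1` and exactly `2c` alternatives tie at the top score `s`, the remaining one scores less
than `s`, and `2c s + (score < s) = c (2c + 1)` fails both for `s ≤ c` and for `s > c`.

Conversely, adding a voter together with the reversed voter does not change the majority
relation, so three voters suffice. Three voters realize the cyclic tournament on `2t + 1`
alternatives placed above a linear order on the rest, which has `2t + 1` Copeland winners; making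
one member of the cycle lose to everything outside it leaves `2t` winners, provided some
alternative lies outside the cycle, i.e. `2t + 1 < m`, which is what the excluded cases ensure.
-/

section Majority

variable {m n : ℕ} (u : Fin n → Fin m ≃ Fin m)

def prefCount (x y : Fin m) : ℕ := #{i | u i x < u i y}

variable {u}

lemma defeats_iff_prefCount_lt {x y : Fin m} :
    defeats u x y ↔ prefCount u y x < prefCount u x y := Iff.rfl

lemma prefCount_add_prefCount {x y : Fin m} (hxy : x ≠ y) :
    prefCount u x y + prefCount u y x = n := by
  have hswap : ∀ i ∈ univ, u i y < u i x ↔ ¬ u i x < u i y := fun i _ =>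
    ⟨lt_asymm, fun h => ((u i).injective.ne hxy).lt_or_gt.resolve_left h⟩
  rw [prefCount, prefCount, filter_congr hswap, card_filter_add_card_filter_not, card_fin]

lemma not_defeats_self (x : Fin m) : ¬ defeats u x x := lt_irrefl _

lemma not_defeats_of_defeats {x y : Fin m} (h : defeats u x y) : ¬ defeats u y x :=
  lt_asymm h

lemma defeats_or_defeats (hn : Odd n) {x y : Fin m} (hxy : x ≠ y) :
    defeats u x y ∨ defeats u y x := by
  have := prefCount_add_prefCount (u := u) hxy
  obtain ⟨r, rfl⟩ := hn
  simp only [defeats_iff_prefCount_lt]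
  omega

lemma copelandScore_add_card_defeatedBy (hn : Odd n) (x : Fin m) :
    copelandScore u x + #{y | defeats u y x} = m - 1 := by
  rw [copelandScore, ← card_union_of_disjoint
    (disjoint_filter.2 fun _ _ h => not_defeats_of_defeats h), ← filter_or]
  have hbeaten : ({y | defeats u x y ∨ defeats u y x} : Finset (Fin m)) = univ.erase x := by
    ext y
    simp only [mem_filter, mem_univ, true_and, mem_erase, and_true]
    refine ⟨?_, fun hyx => defeats_or_defeats hn (Ne.symm hyx)⟩
    rintro (h | h) rfl <;> exact not_defeats_self _ h
  rw [hbeaten, card_erase_of_mem (mem_univ x), card_fin]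

lemma two_mul_sum_copelandScore (hn : Odd n) :
    2 * ∑ x, copelandScore u x = m * (m - 1) := by
  have hswap : ∑ x, copelandScore u x = ∑ x, #{y | defeats u y x} := by
    simp only [copelandScore, card_filter]
    exact sum_comm
  calc 2 * ∑ x, copelandScore u x
      = ∑ x, (copelandScore u x + #{y | defeats u y x}) := by
        rw [sum_add_distrib, ← hswap, two_mul]
    _ = m * (m - 1) := by simp [copelandScore_add_card_defeatedBy hn]

end Majority

section CopelandSet

variable {m n : ℕ} {u : Fin n → Fin m ≃ Fin m} {w z : Fin m}

lemma copelandScore_le_of_mem (hw : w ∈ copelandSet u) (z : Fin m) :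
    copelandScore u z ≤ copelandScore u w :=
  (mem_filter.1 hw).2 z

lemma copelandScore_lt_of_notMem (hw : w ∈ copelandSet u) (hz : z ∉ copelandSet u) :
    copelandScore u z < copelandScore u w := by
  simp only [copelandSet, mem_filter, mem_univ, true_and, not_forall, not_le] at hz
  obtain ⟨y, hy⟩ := hz
  exact hy.trans_le (copelandScore_le_of_mem hw y)

lemma copelandSet_nonempty (hm : 0 < m) : (copelandSet u).Nonempty := by
  obtain ⟨w, -, hw⟩ := exists_max_image univ (copelandScore u) (univ_nonempty_iff.2 ⟨⟨0, hm⟩⟩)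
  exact ⟨w, mem_filter.2 ⟨mem_univ w, fun z => hw z (mem_univ z)⟩⟩

lemma sum_copelandScore_copelandSet (hw : w ∈ copelandSet u) :
    ∑ x ∈ copelandSet u, copelandScore u x = #(copelandSet u) * copelandScore u w :=
  sum_const_nat fun x hx =>
    (copelandScore_le_of_mem hw x).antisymm (copelandScore_le_of_mem hx w)

lemma copelandSet_eq_filter_of_scores (P : Fin m → Prop) [DecidablePred P] (s : ℕ) (hw : P w)
    (hP : ∀ x, P x → copelandScore u x = s) (hnP : ∀ x, ¬ P x → copelandScore u x < s) :
    copelandSet u = ({x | P x} : Finset (Fin m)) := by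
  ext x
  simp only [copelandSet, mem_filter, mem_univ, true_and]
  refine ⟨fun hx => by_contra fun h => ?_, fun hx z => ?_⟩
  · exact (hnP x h).not_ge (hP w hw ▸ hx w)
  · by_cases hz : P z
    · rw [hP z hz, hP x hx]
    · exact (hnP z hz).le.trans (hP x hx).ge

end CopelandSet

section Necessity

variable {m n : ℕ} (u : Fin n → Fin m ≃ Fin m)

lemma odd_of_copelandSet_eq_univ (hn : Odd n) (hm : 0 < m) (h : copelandSet u = univ) :
    Odd m := by
  obtain ⟨w, hw⟩ := copelandSet_nonempty (u := u) hm
  have hsum := two_mul_sum_copelandScore (u := u) hn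
  rw [← h, sum_copelandScore_copelandSet hw, h, card_univ, Fintype.card_fin] at hsum
  have hmul : m * (2 * copelandScore u w) = m * (m - 1) := by linarith
  have := Nat.eq_of_mul_eq_mul_left hm hmul
  exact ⟨copelandScore u w, by omega⟩

lemma card_copelandSet_ne_of_odd (hn : Odd n) (hm : Odd m) :
    #(copelandSet u) ≠ m - 1 := by
  intro hcard
  obtain ⟨c, rfl⟩ := hm
  obtain ⟨w, hw⟩ := copelandSet_nonempty (u := u) (by omega)
  obtain ⟨z, hz⟩ : ∃ z, (copelandSet u)ᶜ = {z} := card_eq_one.1 (by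
    rw [card_compl, hcard, Fintype.card_fin]; omega)
  have hzw := copelandScore_lt_of_notMem hw (by simpa using hz.ge (mem_singleton_self z))
  have hsum := two_mul_sum_copelandScore (u := u) hn
  rw [← sum_add_sum_compl (copelandSet u), sum_copelandScore_copelandSet hw, hz,
    sum_singleton, hcard, Nat.add_sub_cancel] at hsum
  have hc : 0 < c := by
    have := card_pos.2 ⟨w, hw⟩
    omega
  rcases le_or_gt (copelandScore u w) c with hs | hs
  · nlinarith
  · nlinarith

end Necessity

section Padding

variable {m a b : ℕ}

lemma prefCount_append (u : Fin a → Fin m ≃ Fin m) (w : Fin b → Fin m ≃ Fin m) (x y : Fin m) :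
    prefCount (Fin.append u w) x y = prefCount u x y + prefCount w x y := by
  simp only [prefCount, card_filter, Fin.sum_univ_add, Fin.append_left, Fin.append_right]

lemma prefCount_const (r : ℕ) (e : Fin m ≃ Fin m) (x y : Fin m) :
    prefCount (fun _ : Fin r => e) x y = if e x < e y then r else 0 := by
  split_ifs with h <;> simp [prefCount, h]

def reversalPad (m r : ℕ) : Fin (r + r) → Fin m ≃ Fin m :=
  Fin.append (fun _ => Equiv.refl _) (fun _ => Fin.revPerm)

lemma prefCount_reversalPad_comm (r : ℕ) (x y : Fin m) :
    prefCount (reversalPad m r) x y = prefCount (reversalPad m r) y x := by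
  simp only [reversalPad, prefCount_append, prefCount_const, Equiv.refl_apply,
    Fin.revPerm_apply, Fin.rev_lt_rev]
  exact add_comm _ _

lemma copelandSet_append_of_prefCount_comm (u : Fin a → Fin m ≃ Fin m)
    (w : Fin b → Fin m ≃ Fin m) (hw : ∀ x y, prefCount w x y = prefCount w y x) :
    copelandSet (Fin.append u w) = copelandSet u := by
  have hdefeats : ∀ x y, defeats (Fin.append u w) x y ↔ defeats u x y := fun x y => by
    rw [defeats_iff_prefCount_lt, defeats_iff_prefCount_lt, prefCount_append, prefCount_append,
      hw y x, Nat.add_lt_add_iff_right]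
  have hscore : ∀ x, copelandScore (Fin.append u w) x = copelandScore u x := fun x =>
    congrArg card (filter_congr fun y _ => hdefeats x y)
  ext x
  simp only [copelandSet, mem_filter, hscore]

end Padding

section ThreeVoters

variable {m : ℕ}

noncomputable def rankPerm (f : ℕ → ℕ) (hf : ∀ x < m, f x < m)
    (hinj : ∀ x < m, ∀ y < m, f x = f y → x = y) : Fin m ≃ Fin m :=
  Equiv.ofBijective (fun x => ⟨f x, hf x x.isLt⟩) <| Finite.injective_iff_bijective.mp
    fun x y h => Fin.ext (hinj x x.isLt y y.isLt (Fin.val_eq_of_eq h))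

@[simp]
lemma rankPerm_lt_rankPerm_iff (f : ℕ → ℕ) (hf : ∀ x < m, f x < m)
    (hinj : ∀ x < m, ∀ y < m, f x = f y → x = y) (x y : Fin m) :
    rankPerm f hf hinj x < rankPerm f hf hinj y ↔ f x < f y :=
  Iff.rfl

lemma defeats_three_iff (v : Fin 3 → Fin m ≃ Fin m) {x y : Fin m} (hxy : x ≠ y) :
    defeats v x y ↔ v 0 x < v 0 y ∧ v 1 x < v 1 y ∨ v 0 x < v 0 y ∧ v 2 x < v 2 y ∨
      v 1 x < v 1 y ∧ v 2 x < v 2 y := by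
  have htotal := prefCount_add_prefCount (u := v) hxy
  rw [defeats_iff_prefCount_lt]
  simp only [prefCount, card_filter, Fin.sum_univ_three] at htotal ⊢
  split_ifs at htotal ⊢ <;> simp_all

end ThreeVoters

lemma card_filter_eq_of_iff_Ico {m : ℕ} (P : Fin m → Prop) [DecidablePred P] {a b c d : ℕ}
    (hP : ∀ y : Fin m, P y ↔ a ≤ y ∧ y < b ∨ c ≤ y ∧ y < d)
    (hbc : b ≤ c) (hb : b ≤ m) (hd : d ≤ m) :
    #{y | P y} = (b - a) + (d - c) := by
  have hrange : (range m).filter (fun y => a ≤ y ∧ y < b ∨ c ≤ y ∧ y < d) = Ico a b ∪ Ico c d := by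
    ext y
    simp only [mem_filter, mem_range, mem_union, mem_Ico]
    omega
  rw [filter_congr fun y _ => hP y, card_filter,
    Fin.sum_univ_eq_sum_range (fun y => if a ≤ y ∧ y < b ∨ c ≤ y ∧ y < d then 1 else 0),
    ← card_filter, hrange, card_union_of_disjoint, Nat.card_Ico, Nat.card_Ico]
  exact disjoint_left.2 fun y hy hy' => by simp only [mem_Ico] at hy hy'; omega

section OddSize

variable (m t : ℕ)

def shiftRank (x : ℕ) : ℕ :=
  if x < 2 * t + 1 then (if x ≤ t then x + t else x - t - 1) else x

def zigzagRank (x : ℕ) : ℕ :=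
  if x < 2 * t + 1 then (if x ≤ t then 2 * (t - x) else 2 * (2 * t - x) + 1) else x

/-- The three voters realize the cyclic tournament on `{0, …, 2t}` (each `x` beats the `t`
alternatives following it mod `2t + 1`), placed above the linear order on the others. -/
noncomputable def oddProfile (h : 2 * t + 1 ≤ m) : Fin 3 → Fin m ≃ Fin m :=
  ![Equiv.refl _,
    rankPerm (shiftRank t) (fun x hx => by unfold shiftRank; split_ifs <;> omega)
      (fun x _ y _ => by unfold shiftRank; split_ifs <;> omega),
    rankPerm (zigzagRank t) (fun x hx => by unfold zigzagRank; split_ifs <;> omega)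
      (fun x _ y _ => by unfold zigzagRank; split_ifs <;> omega)]

variable {m t}

lemma defeats_oddProfile_iff (h : 2 * t + 1 ≤ m) (x y : Fin m) :
    defeats (oddProfile m t h) x y ↔
      x < 2 * t + 1 ∧ y < 2 * t + 1 ∧ (x < y ∧ y ≤ x + t ∨ y + t < x) ∨
      x < 2 * t + 1 ∧ 2 * t + 1 ≤ y ∨ 2 * t + 1 ≤ x ∧ x < y := by
  rcases eq_or_ne x y with rfl | hxy
  · simp only [not_defeats_self, false_iff]
    omega
  rw [defeats_three_iff _ hxy]
  simp only [oddProfile, Matrix.cons_val_zero, Matrix.cons_val_one, Matrix.cons_val_two,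
    Matrix.head_cons, Matrix.tail_cons, Equiv.refl_apply, rankPerm_lt_rankPerm_iff]
  simp only [Fin.lt_def]
  unfold shiftRank zigzagRank
  have := Fin.val_ne_of_ne hxy
  split_ifs <;> omega

lemma copelandScore_oddProfile (h : 2 * t + 1 ≤ m) (x : Fin m) :
    copelandScore (oddProfile m t h) x = if x < 2 * t + 1 then m - 1 - t else m - 1 - x := by
  rw [copelandScore]
  split_ifs with hx
  · by_cases hxt : x ≤ t
    · rw [card_filter_eq_of_iff_Ico _ (a := x + 1) (b := x + t + 1) (c := 2 * t + 1) (d := m)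
        (fun y => by rw [defeats_oddProfile_iff]; omega) (by omega) (by omega) le_rfl]
      omega
    · rw [card_filter_eq_of_iff_Ico _ (a := 0) (b := x - t) (c := x + 1) (d := m)
        (fun y => by rw [defeats_oddProfile_iff]; omega) (by omega) (by omega) le_rfl]
      omega
  · rw [card_filter_eq_of_iff_Ico _ (a := 0) (b := 0) (c := x + 1) (d := m)
      (fun y => by rw [defeats_oddProfile_iff]; omega) (by omega) (by omega) le_rfl]
    omega

lemma card_copelandSet_oddProfile (h : 2 * t + 1 ≤ m) :
    #(copelandSet (oddProfile m t h)) = 2 * t + 1 := by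
  rw [copelandSet_eq_filter_of_scores (fun x => x < 2 * t + 1) (m - 1 - t) (w := ⟨0, by omega⟩)
    (by simp) (fun x hx => by rw [copelandScore_oddProfile, if_pos hx])
    (fun x hx => by rw [copelandScore_oddProfile, if_neg hx]; omega),
    card_filter_eq_of_iff_Ico _ (a := 0) (b := 2 * t + 1) (c := 2 * t + 1) (d := 2 * t + 1)
      (fun y => by omega) le_rfl h h]
  omega

end OddSize

section EvenSize

variable (m t : ℕ)

def lowerBlockRank (x : ℕ) : ℕ :=
  if x < 2 * t + 1 then x + (m - (2 * t + 1)) else x - (2 * t + 1)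

def demotedZigzagRank (x : ℕ) : ℕ :=
  if x = 0 then m - 1 else if x < 2 * t + 1 then zigzagRank t x else x - 1

/-- As `oddProfile`, except that alternative `0` now loses to every alternative outside the
cycle, which leaves `2t` alternatives with the top score. -/
noncomputable def evenProfile (h : 2 * t + 1 < m) : Fin 3 → Fin m ≃ Fin m :=
  ![rankPerm (lowerBlockRank m t) (fun x hx => by unfold lowerBlockRank; split_ifs <;> omega)
      (fun x _ y _ => by unfold lowerBlockRank; split_ifs <;> omega),
    rankPerm (shiftRank t) (fun x hx => by unfold shiftRank; split_ifs <;> omega)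
      (fun x _ y _ => by unfold shiftRank; split_ifs <;> omega),
    rankPerm (demotedZigzagRank m t)
      (fun x hx => by unfold demotedZigzagRank zigzagRank; split_ifs <;> omega)
      (fun x _ y _ => by unfold demotedZigzagRank zigzagRank; split_ifs <;> omega)]

variable {m t}

lemma defeats_evenProfile_iff (h : 2 * t + 1 < m) (x y : Fin m) :
    defeats (evenProfile m t h) x y ↔
      x < 2 * t + 1 ∧ y < 2 * t + 1 ∧ (x < y ∧ y ≤ x + t ∨ y + t < x) ∨
      1 ≤ (x : ℕ) ∧ x < 2 * t + 1 ∧ 2 * t + 1 ≤ y ∨ 2 * t + 1 ≤ x ∧ (y : ℕ) = 0 ∨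
      2 * t + 1 ≤ x ∧ x < y := by
  rcases eq_or_ne x y with rfl | hxy
  · simp only [not_defeats_self, false_iff]
    omega
  rw [defeats_three_iff _ hxy]
  simp only [evenProfile, Matrix.cons_val_zero, Matrix.cons_val_one, Matrix.cons_val_two,
    Matrix.head_cons, Matrix.tail_cons, rankPerm_lt_rankPerm_iff]
  unfold lowerBlockRank shiftRank demotedZigzagRank zigzagRank
  have := Fin.val_ne_of_ne hxy
  split_ifs <;> omega

lemma copelandScore_evenProfile (h : 2 * t + 1 < m) (x : Fin m) :
    copelandScore (evenProfile m t h) x =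
      if (x : ℕ) = 0 then t else if x < 2 * t + 1 then m - 1 - t else m - x := by
  rw [copelandScore]
  split_ifs with hx0 hx
  · rw [card_filter_eq_of_iff_Ico _ (a := 0) (b := 0) (c := 1) (d := t + 1)
      (fun y => by rw [defeats_evenProfile_iff]; omega) zero_le_one (by omega) (by omega)]
    omega
  · by_cases hxt : x ≤ t
    · rw [card_filter_eq_of_iff_Ico _ (a := x + 1) (b := x + t + 1) (c := 2 * t + 1) (d := m)
        (fun y => by rw [defeats_evenProfile_iff]; omega) (by omega) (by omega) le_rfl]
      omega
    · rw [card_filter_eq_of_iff_Ico _ (a := 0) (b := x - t) (c := x + 1) (d := m)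
        (fun y => by rw [defeats_evenProfile_iff]; omega) (by omega) (by omega) le_rfl]
      omega
  · rw [card_filter_eq_of_iff_Ico _ (a := 0) (b := 1) (c := x + 1) (d := m)
      (fun y => by rw [defeats_evenProfile_iff]; omega) (by omega) (by omega) le_rfl]
    omega

lemma card_copelandSet_evenProfile (ht : 0 < t) (h : 2 * t + 1 < m) :
    #(copelandSet (evenProfile m t h)) = 2 * t := by
  rw [copelandSet_eq_filter_of_scores (fun x => 1 ≤ (x : ℕ) ∧ x < 2 * t + 1) (m - 1 - t)
    (w := ⟨1, by omega⟩) (by simp; omega)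
    (fun x hx => by rw [copelandScore_evenProfile, if_neg (by omega), if_pos hx.2])
    (fun x hx => by rw [copelandScore_evenProfile]; split_ifs <;> omega),
    card_filter_eq_of_iff_Ico _ (a := 1) (b := 2 * t + 1) (c := 2 * t + 1) (d := 2 * t + 1)
      (fun y => by omega) le_rfl h.le h.le]
  omega

end EvenSize

lemma exists_card_copelandSet_three {m k : ℕ} (hk : 1 ≤ k) (hkm : k ≤ m)
    (heven : ¬ (Even m ∧ k = m)) (hodd : ¬ (Odd m ∧ k = m - 1)) :
    ∃ v : Fin 3 → Fin m ≃ Fin m, #(copelandSet v) = k := by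
  rw [Nat.even_iff] at heven
  rw [Nat.odd_iff] at hodd
  obtain ⟨t, rfl | rfl⟩ := Nat.even_or_odd' k
  · exact ⟨evenProfile m t (by omega), card_copelandSet_evenProfile (by omega) _⟩
  · exact ⟨oddProfile m t hkm, card_copelandSet_oddProfile hkm⟩

lemma exists_card_copelandSet_of_three {m n k : ℕ} (hno : Odd n) (hn : 3 ≤ n)
    (v : Fin 3 → Fin m ≃ Fin m) (hv : #(copelandSet v) = k) :
    ∃ u : Fin n → Fin m ≃ Fin m, #(copelandSet u) = k := by
  obtain ⟨r, rfl⟩ : ∃ r, n = 3 + (r + r) := by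
    obtain ⟨j, rfl⟩ := hno
    exact ⟨j - 1, by omega⟩
  refine ⟨Fin.append v (reversalPad m r), ?_⟩
  rw [copelandSet_append_of_prefCount_comm _ _ (prefCount_reversalPad_comm r), hv]

theorem copeland_range_characterization_general (m n : ℕ) (hno : Odd n)
    (hn : 3 ≤ n) (k : ℕ) (hk : 1 ≤ k) (hkm : k ≤ m) :
    (∃ u : Fin n → (Fin m ≃ Fin m), (copelandSet u).card = k) ↔
      (¬ (Even m ∧ k = m) ∧ ¬ (Odd m ∧ k = m - 1)) := by
  constructor
  · rintro ⟨u, rfl⟩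
    refine ⟨fun ⟨hm, hcard⟩ => ?_, fun ⟨hm, hcard⟩ => card_copelandSet_ne_of_odd u hno hm hcard⟩
    have huniv : copelandSet u = univ := eq_univ_of_card _ (by rw [hcard, Fintype.card_fin])
    exact Nat.not_odd_iff_even.2 hm (odd_of_copelandSet_eq_univ u hno (by omega) huniv)
  · rintro ⟨heven, hodd⟩
    obtain ⟨v, hv⟩ := exists_card_copelandSet_three hk hkm heven hodd
    exact exists_card_copelandSet_of_three hno hn v hv

/-- For odd `n ≥ 3` and `1 ≤ k ≤ m`: a Copeland choice set of size `k` is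
achievable if and only if it is not the case that (`m` is even and `k = m`)
and not the case that (`m` is odd and `k = m − 1`). -/
theorem copeland_range_characterization (m n : ℕ) (hm : 3 ≤ m) (hno : Odd n)
    (hn : 3 ≤ n) (k : ℕ) (hk : 1 ≤ k) (hkm : k ≤ m) :
    (∃ u : Fin n → (Fin m ≃ Fin m), (copelandSet u).card = k) ↔
      (¬ (Even m ∧ k = m) ∧ ¬ (Odd m ∧ k = m - 1)) :=
  copeland_range_characterization_general m n hno hn k hk hkm
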